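/- Let S be a linear subspace of ℝ^d, let Z be a random vector in ℝ^d supported in S with finite second moment, and let Y be a random vector in ℝ^d with finite second moment. Write Y_S and Y_{S⊥} for the orthogonal projections of Y onto S and its orthogonal complement. Then for every λ > 0 the Sinkhorn divergence satisfies S_λ(P_Z, P_Y) = S_λ(P_Z, P_{Y_S}) + E[‖Y_{S⊥}‖²] + ( W²_{2,λ}(P_{Y_S}, P_{Y_S}) − W²_{2,λ}(P_Y, P_Y) )/2. -/

import Mathlib

open MeasureTheory ProbabilityTheory Matrix
open scoped ENNReal NNReal Classical

noncomputable section

abbrev Evec (d : ℕ) := EuclideanSpace ℝ (Fin d)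

/-- Couplings: joint measures with prescribed marginals. -/
def IsCoupling {E F : Type*} [MeasurableSpace E] [MeasurableSpace F]
    (π : Measure (E × F)) (P : Measure E) (Q : Measure F) : Prop :=
  π.fst = P ∧ π.snd = Q

/-- KL divergence valued in `ℝ≥0∞` (junk value `⊤` when not absolutely continuous
or not integrable). -/
def klDivNN {E : Type*} [MeasurableSpace E] (μ ν : Measure E) : ℝ≥0∞ :=
  if μ ≪ ν ∧ Integrable (fun x => Real.log (μ.rnDeriv ν x).toReal) μ
  then ENNReal.ofReal (∫ x, Real.log (μ.rnDeriv ν x).toReal ∂μ)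
  else ⊤

/-- Mutual information of a joint measure. -/
def mutInfo {E F : Type*} [MeasurableSpace E] [MeasurableSpace F]
    (π : Measure (E × F)) : ℝ≥0∞ :=
  if h : SFinite π.snd then klDivNN π (haveI := h; π.fst.prod π.snd) else ⊤

/-- Entropy-regularized squared 2-Wasserstein distance. -/
def entW2 {d : ℕ} (lam : ℝ) (P Q : Measure (Evec d)) : ℝ :=
  sInf {c : ℝ | ∃ π : Measure (Evec d × Evec d), IsCoupling π P Q ∧ mutInfo π ≠ ⊤ ∧
    Integrable (fun p => ‖p.1 - p.2‖ ^ 2) π ∧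
    c = ∫ p, ‖p.1 - p.2‖ ^ 2 ∂π + lam * (mutInfo π).toReal}

/-- Sinkhorn divergence. -/
def sinkhornDiv {d : ℕ} (lam : ℝ) (P Q : Measure (Evec d)) : ℝ :=
  entW2 lam P Q - (entW2 lam P P + entW2 lam Q Q) / 2

/-- Standard Gaussian on `ℝ^r`. -/
def stdGaussian (r : ℕ) : Measure (Evec r) :=
  Measure.map (⇑(EuclideanSpace.equiv (Fin r) ℝ).symm)
    (Measure.pi fun _ : Fin r => gaussianReal 0 1)

/-- The map `x ↦ G x` of a matrix acting on Euclidean space. -/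
def matVecMap {d r : ℕ} (G : Matrix (Fin d) (Fin r) ℝ) : Evec r → Evec d :=
  fun x => (EuclideanSpace.equiv (Fin d) ℝ).symm (G.mulVec (EuclideanSpace.equiv (Fin r) ℝ x))

/-- Centered Gaussian measure with covariance `K`. -/
def gaussianOfCov {d : ℕ} (K : Matrix (Fin d) (Fin d) ℝ) (hK : K.PosSemidef) :
    Measure (Evec d) :=
  Measure.map (matVecMap (hK.1.eigenvectorUnitary.1 * diagonal (fun i => Real.sqrt (hK.1.eigenvalues i)) *
    (star hK.1.eigenvectorUnitary : Matrix (Fin d) (Fin d) ℝ))) (stdGaussian d)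

/-- Covariance matrix of a measure on `ℝ^d`. -/
def covMatrix {d : ℕ} (μ : Measure (Evec d)) : Matrix (Fin d) (Fin d) ℝ :=
  Matrix.of fun i j => ∫ x, (x i - ∫ y, y i ∂μ) * (x j - ∫ y, y j ∂μ) ∂μ

/-- The sub-gaussian condition with parameter `s` for a measure on `ℝ^d`. -/
def IsSubG {d : ℕ} (μ : Measure (Evec d)) (s : ℝ) : Prop :=
  ∫ x, Real.exp (‖x‖ ^ 2 / (2 * d * s)) ∂μ ≤ 2

/-- The sub-gaussian parameter `σ²(X)` of a measure on `ℝ^d`. -/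
def subgParam {d : ℕ} (μ : Measure (Evec d)) : ℝ :=
  sInf {s : ℝ | 0 < s ∧ IsSubG μ s}

/-- Empirical measure of a sample. -/
def empMeasure {d : ℕ} (n : ℕ) (y : Fin n → Evec d) : Measure (Evec d) :=
  (n : ℝ≥0∞)⁻¹ • ∑ i : Fin n, Measure.dirac (y i)

/-- `u` is an orthonormal eigenbasis of `K` with eigenvalues `μ` in decreasing order. -/
def IsEigenDecomp {d : ℕ} (K : Matrix (Fin d) (Fin d) ℝ)
    (u : Fin d → Evec d) (μ : Fin d → ℝ) : Prop :=
  Orthonormal ℝ u ∧ Antitone μ ∧ ∀ i, matVecMap K (u i) = μ i • u i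


/-- Orthogonal projection onto a subspace, as a map of the ambient space. -/
def projSub {d : ℕ} (S : Submodule ℝ (Evec d)) : Evec d → Evec d :=
  fun y => (S.orthogonalProjectionOnto y : Evec d)

/-!
Write `P` for the orthogonal projection onto `S`. Since `Z ∈ S`, Pythagoras gives
`‖Z - Y‖² = ‖Z - P Y‖² + ‖Y - P Y‖²`, so the transport cost of a coupling of `(Z, Y)` is that of
the induced coupling of `(Z, P Y)` plus `E‖Y - P Y‖²`, and passing to `(Z, P Y)` does not increase
the mutual information (data processing). Conversely, a coupling of `(Z, P Y)` lifts to one of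
`(Z, Y)` by drawing `Y` from its conditional law given `P Y`; the lift projects back onto the
coupling we started from and, again by data processing, does not increase the mutual information.
Hence `W²_{2,λ}(P_Z, P_Y) = W²_{2,λ}(P_Z, P_{Y_S}) + E‖Y_{S⊥}‖²`, and the identity for the Sinkhorn
divergences is a rearrangement.
-/

open InformationTheory

section Couplings

variable {E F E' F' : Type*} [MeasurableSpace E] [MeasurableSpace F]
  [MeasurableSpace E'] [MeasurableSpace F']

lemma IsCoupling.isProbabilityMeasure {π : Measure (E × F)} {P : Measure E} {Q : Measure F}
    [IsProbabilityMeasure P] (h : IsCoupling π P Q) : IsProbabilityMeasure π := by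
  have := h.1 ▸ (inferInstance : IsProbabilityMeasure P)
  exact ⟨by simpa [Measure.fst_apply] using this.measure_univ⟩

lemma IsCoupling.map_prodMap {π : Measure (E × F)} {P : Measure E} {Q : Measure F}
    (h : IsCoupling π P Q) {f : E → E'} {g : F → F'} (hf : Measurable f) (hg : Measurable g) :
    IsCoupling (π.map (Prod.map f g)) (P.map f) (Q.map g) := by
  refine ⟨?_, ?_⟩
  · rw [← h.1, Measure.fst, Measure.fst, Measure.map_map measurable_fst (hf.prodMap hg),
      Measure.map_map hf measurable_fst]
    rfl
  · rw [← h.2, Measure.snd, Measure.snd, Measure.map_map measurable_snd (hf.prodMap hg),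
      Measure.map_map hg measurable_snd]
    rfl

lemma fst_parallelComp_comp (κ : Kernel E E') (η : Kernel F F') [IsMarkovKernel κ]
    [IsMarkovKernel η] (π : Measure (E × F)) : ((κ ∥ₖ η) ∘ₘ π).fst = κ ∘ₘ π.fst := by
  ext s hs
  rw [Measure.fst_apply hs, Measure.bind_apply (measurable_fst hs) (Kernel.aemeasurable _),
    Measure.bind_apply hs (Kernel.aemeasurable _), Measure.fst,
    lintegral_map (Kernel.measurable_coe _ hs) measurable_fst]
  congr with p
  rw [← Set.prod_univ, Kernel.parallelComp_apply_prod]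
  simp

lemma snd_parallelComp_comp (κ : Kernel E E') (η : Kernel F F') [IsMarkovKernel κ]
    [IsMarkovKernel η] (π : Measure (E × F)) : ((κ ∥ₖ η) ∘ₘ π).snd = η ∘ₘ π.snd := by
  ext s hs
  rw [Measure.snd_apply hs, Measure.bind_apply (measurable_snd hs) (Kernel.aemeasurable _),
    Measure.bind_apply hs (Kernel.aemeasurable _), Measure.snd,
    lintegral_map (Kernel.measurable_coe _ hs) measurable_snd]
  congr with p
  rw [← Set.univ_prod, Kernel.parallelComp_apply_prod]
  simp

lemma prod_comp_eq_parallelComp_comp_prod (κ : Kernel E E') (η : Kernel F F')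
    [IsMarkovKernel κ] [IsMarkovKernel η] (μ : Measure E) (ν : Measure F)
    [SFinite μ] [SFinite ν] : (κ ∘ₘ μ).prod (η ∘ₘ ν) = (κ ∥ₖ η) ∘ₘ μ.prod ν := by
  rw [Measure.prod_comp_right, Measure.prod_comp_left, Measure.comp_assoc,
    Kernel.id_parallelComp_comp_parallelComp_id]

end Couplings

section MutualInformation

lemma klDivNN_eq_klDiv {α : Type*} [MeasurableSpace α] (μ ν : Measure α) [IsFiniteMeasure μ]
    [IsFiniteMeasure ν] (h : μ Set.univ = ν Set.univ) : klDivNN μ ν = klDiv μ ν := by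
  have hreal : μ.real Set.univ = ν.real Set.univ := by simp [measureReal_def, h]
  rw [klDivNN, klDiv_def, hreal, add_sub_cancel_right]
  rfl

variable {E F E' F' : Type*} [MeasurableSpace E] [MeasurableSpace F]
  [MeasurableSpace E'] [MeasurableSpace F']

lemma mutInfo_eq_klDiv (π : Measure (E × F)) [IsProbabilityMeasure π] :
    mutInfo π = klDiv π (π.fst.prod π.snd) := by
  rw [mutInfo, dif_pos (inferInstanceAs (SFinite π.snd)), klDivNN_eq_klDiv]
  simp

lemma mutInfo_prod_ne_top (P : Measure E) (Q : Measure F) [IsProbabilityMeasure P]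
    [IsProbabilityMeasure Q] :
    mutInfo (P.prod Q) ≠ ⊤ := by
  simp [mutInfo_eq_klDiv]

lemma mutInfo_parallelComp_comp_le (κ : Kernel E E') (η : Kernel F F') [IsMarkovKernel κ]
    [IsMarkovKernel η] (π : Measure (E × F)) [IsProbabilityMeasure π] :
    mutInfo ((κ ∥ₖ η) ∘ₘ π) ≤ mutInfo π := by
  rw [mutInfo_eq_klDiv, mutInfo_eq_klDiv, fst_parallelComp_comp, snd_parallelComp_comp,
    prod_comp_eq_parallelComp_comp_prod]
  exact klDiv_comp_right_le _ _ _

lemma mutInfo_map_prodMap_le {f : E → E'} {g : F → F'} (hf : Measurable f) (hg : Measurable g)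
    (π : Measure (E × F)) [IsProbabilityMeasure π] :
    mutInfo (π.map (Prod.map f g)) ≤ mutInfo π := by
  rw [← Measure.deterministic_comp_eq_map (hf.prodMap hg),
    ← Kernel.deterministic_parallelComp_deterministic hf hg]
  exact mutInfo_parallelComp_comp_le _ _ π

end MutualInformation

section ConditionalLift

variable {E X Ω : Type*} [MeasurableSpace E] [MeasurableSpace X] [MeasurableSpace Ω]
  [StandardBorelSpace Ω] [Nonempty Ω] {μ : Measure Ω} [IsProbabilityMeasure μ] {φ : Ω → X}

lemma condDistrib_id_comp_map (hφ : Measurable φ) : condDistrib id φ μ ∘ₘ μ.map φ = μ := by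
  rw [condDistrib_comp_map hφ.aemeasurable aemeasurable_id, Measure.map_id]

lemma map_condDistrib_id_ae_eq [StandardBorelSpace X] (hφ : Measurable φ) :
    (condDistrib id φ μ).map φ =ᵐ[μ.map φ] Kernel.id := by
  have : Nonempty X := ⟨φ (Classical.arbitrary Ω)⟩
  filter_upwards [condDistrib_comp (μ := μ) φ aemeasurable_id hφ,
    condDistrib_comp_self (μ := μ) φ measurable_id] with x h₁ h₂
  exact h₁.symm.trans h₂

lemma IsCoupling.parallelComp_condDistrib {π : Measure (E × X)} {P : Measure E}
    (hπ : IsCoupling π P (μ.map φ)) (hφ : Measurable φ) :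
    IsCoupling ((Kernel.id ∥ₖ condDistrib id φ μ) ∘ₘ π) P μ := by
  refine ⟨?_, ?_⟩
  · rw [fst_parallelComp_comp, hπ.1, Measure.id_comp]
  · rw [snd_parallelComp_comp, hπ.2, condDistrib_id_comp_map hφ]

lemma map_prodMap_parallelComp_condDistrib [StandardBorelSpace X] {π : Measure (E × X)}
    (hπ : π.snd = μ.map φ) (hφ : Measurable φ) :
    ((Kernel.id ∥ₖ condDistrib id φ μ) ∘ₘ π).map (Prod.map id φ) = π := by
  have h_ae : ∀ᵐ p ∂π, (condDistrib id φ μ).map φ p.2 = Kernel.id p.2 :=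
    ae_of_ae_map measurable_snd.aemeasurable (hπ ▸ map_condDistrib_id_ae_eq hφ)
  calc ((Kernel.id ∥ₖ condDistrib id φ μ) ∘ₘ π).map (Prod.map id φ)
      = (Kernel.id ∥ₖ (condDistrib id φ μ).map φ) ∘ₘ π := by
        rw [← Measure.deterministic_comp_eq_map (measurable_id.prodMap hφ), Measure.comp_assoc,
          ← Kernel.deterministic_parallelComp_deterministic measurable_id hφ,
          Kernel.parallelComp_comp_parallelComp, Kernel.deterministic_comp_eq_map,
          Kernel.deterministic_comp_eq_map, Kernel.map_id]
    _ = (Kernel.id ∥ₖ Kernel.id) ∘ₘ π := by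
        refine Measure.comp_congr ?_
        filter_upwards [h_ae] with p hp
        rw [Kernel.parallelComp_apply, Kernel.parallelComp_apply, hp]
    _ = π := by rw [Kernel.id_parallelComp_id, Measure.id_comp]

end ConditionalLift

section SecondMoments

variable {E : Type*} [NormedAddCommGroup E] [MeasurableSpace E]

lemma integrable_sq_norm_map_of_norm_le {F : Type*} [NormedAddCommGroup F] [MeasurableSpace F]
    [OpensMeasurableSpace F] {μ : Measure E} {f : E → F} (hf : Measurable f)
    (hfle : ∀ y, ‖f y‖ ≤ ‖y‖) (h : Integrable (fun y => ‖y‖ ^ 2) μ) :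
    Integrable (fun x => ‖x‖ ^ 2) (μ.map f) := by
  refine (integrable_map_measure (by fun_prop) hf.aemeasurable).mpr
    (h.mono' (hf.norm.pow_const 2).aestronglyMeasurable
      (Filter.Eventually.of_forall fun y => ?_))
  rw [Function.comp_apply, Real.norm_of_nonneg (by positivity)]
  gcongr
  exact hfle y

lemma integrable_sq_norm_sub_of_fst_of_snd [OpensMeasurableSpace E] [SecondCountableTopology E]
    {π : Measure (E × E)} (h₁ : Integrable (fun x => ‖x‖ ^ 2) π.fst)
    (h₂ : Integrable (fun y => ‖y‖ ^ 2) π.snd) :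
    Integrable (fun p : E × E => ‖p.1 - p.2‖ ^ 2) π := by
  have h₁' := (integrable_map_measure (by fun_prop) measurable_fst.aemeasurable).mp h₁
  have h₂' := (integrable_map_measure (by fun_prop) measurable_snd.aemeasurable).mp h₂
  refine ((h₁'.add h₂').const_mul 2).mono' (by fun_prop)
    (Filter.Eventually.of_forall fun p => ?_)
  rw [Real.norm_of_nonneg (by positivity)]
  have := norm_sub_le p.1 p.2
  simp only [Pi.add_apply, Function.comp_apply]
  nlinarith [norm_nonneg (p.1 - p.2), sq_nonneg (‖p.1‖ - ‖p.2‖)]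

end SecondMoments

section Projection

variable {d : ℕ} (S : Submodule ℝ (Evec d))

lemma measurable_projSub : Measurable (projSub S) :=
  S.starProjection.continuous.measurable

lemma norm_projSub_le (y : Evec d) : ‖projSub S y‖ ≤ ‖y‖ :=
  S.norm_starProjection_apply_le y

lemma norm_sub_sq_eq_add_of_mem {z : Evec d} (hz : z ∈ S) (y : Evec d) :
    ‖z - y‖ ^ 2 = ‖z - projSub S y‖ ^ 2 + ‖y - projSub S y‖ ^ 2 := by
  have h_orth : inner ℝ (z - projSub S y) (y - projSub S y) = 0 :=
    (Submodule.mem_orthogonal S _).mp (S.sub_starProjection_mem_orthogonal y) _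
      (S.sub_mem hz (S.starProjection_apply_mem y))
  rw [show z - y = (z - projSub S y) - (y - projSub S y) by abel, norm_sub_sq_real, h_orth]
  ring

lemma integral_sq_norm_sub_eq_map_add {π : Measure (Evec d × Evec d)}
    (hS : ∀ᵐ p ∂π, p.1 ∈ S) (hπ : Integrable (fun p : Evec d × Evec d => ‖p.1 - p.2‖ ^ 2) π) :
    ∫ p, ‖p.1 - p.2‖ ^ 2 ∂π = ∫ p, ‖p.1 - p.2‖ ^ 2 ∂(π.map (Prod.map id (projSub S))) +
      ∫ y, ‖y - projSub S y‖ ^ 2 ∂π.snd := by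
  have hP := measurable_projSub S
  have h_split : ∀ᵐ p ∂π, ‖p.1 - p.2‖ ^ 2 =
      ‖p.1 - projSub S p.2‖ ^ 2 + ‖p.2 - projSub S p.2‖ ^ 2 := by
    filter_upwards [hS] with p hp using norm_sub_sq_eq_add_of_mem S hp p.2
  have h_int₁ : Integrable (fun p : Evec d × Evec d => ‖p.1 - projSub S p.2‖ ^ 2) π :=
    hπ.mono' (by fun_prop) (by
      filter_upwards [h_split] with p hp
      rw [Real.norm_of_nonneg (by positivity), hp]
      exact le_add_of_nonneg_right (by positivity))
  have h_int₂ : Integrable (fun p : Evec d × Evec d => ‖p.2 - projSub S p.2‖ ^ 2) π :=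
    hπ.mono' (by fun_prop) (by
      filter_upwards [h_split] with p hp
      rw [Real.norm_of_nonneg (by positivity), hp]
      exact le_add_of_nonneg_left (by positivity))
  rw [integral_congr_ae h_split, integral_add h_int₁ h_int₂,
    integral_map (measurable_id.prodMap hP).aemeasurable (by fun_prop), Measure.snd,
    integral_map measurable_snd.aemeasurable (by fun_prop)]
  rfl

end Projection

section EntropicCost

variable {d : ℕ}

def entropicCost (lam : ℝ) (π : Measure (Evec d × Evec d)) : ℝ :=
  ∫ p, ‖p.1 - p.2‖ ^ 2 ∂π + lam * (mutInfo π).toReal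

lemma entW2_le_entropicCost {lam : ℝ} (hlam : 0 ≤ lam) {P Q : Measure (Evec d)}
    {π : Measure (Evec d × Evec d)} (hπ : IsCoupling π P Q) (hmi : mutInfo π ≠ ⊤)
    (hcost : Integrable (fun p : Evec d × Evec d => ‖p.1 - p.2‖ ^ 2) π) :
    entW2 lam P Q ≤ entropicCost lam π := by
  refine csInf_le ⟨0, ?_⟩ ⟨π, hπ, hmi, hcost, rfl⟩
  rintro _ ⟨π', -, -, -, rfl⟩
  have : 0 ≤ ∫ p, ‖p.1 - p.2‖ ^ 2 ∂π' := integral_nonneg fun p => by positivity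
  positivity

lemma le_entW2 {lam c : ℝ} {P Q : Measure (Evec d)} [IsProbabilityMeasure P]
    [IsProbabilityMeasure Q] (hP : Integrable (fun x => ‖x‖ ^ 2) P)
    (hQ : Integrable (fun y => ‖y‖ ^ 2) Q)
    (h : ∀ π, IsCoupling π P Q → mutInfo π ≠ ⊤ → c ≤ entropicCost lam π) :
    c ≤ entW2 lam P Q := by
  have h_prod : Integrable (fun p : Evec d × Evec d => ‖p.1 - p.2‖ ^ 2) (P.prod Q) :=
    integrable_sq_norm_sub_of_fst_of_snd (by rwa [Measure.fst_prod]) (by rwa [Measure.snd_prod])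
  refine le_csInf ⟨_, P.prod Q, ⟨Measure.fst_prod, Measure.snd_prod⟩,
    mutInfo_prod_ne_top P Q, h_prod, rfl⟩ ?_
  rintro _ ⟨π, hπ, hmi, -, rfl⟩
  exact h π hπ hmi

end EntropicCost

section Decomposition

variable {d : ℕ} (S : Submodule ℝ (Evec d)) {PZ PY : Measure (Evec d)}

lemma IsCoupling.integral_sq_norm_sub_eq_map_projSub_add {π : Measure (Evec d × Evec d)}
    (hπ : IsCoupling π PZ PY) (hZS : ∀ᵐ z ∂PZ, z ∈ S) (hZ2 : Integrable (fun z => ‖z‖ ^ 2) PZ)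
    (hY2 : Integrable (fun y => ‖y‖ ^ 2) PY) :
    ∫ p, ‖p.1 - p.2‖ ^ 2 ∂π = ∫ p, ‖p.1 - p.2‖ ^ 2 ∂(π.map (Prod.map id (projSub S))) +
      ∫ y, ‖y - projSub S y‖ ^ 2 ∂PY := by
  have hπS : ∀ᵐ p ∂π, p.1 ∈ S :=
    ae_of_ae_map measurable_fst.aemeasurable (show ∀ᵐ z ∂π.fst, z ∈ S from hπ.1 ▸ hZS)
  rw [integral_sq_norm_sub_eq_map_add S hπS
    (integrable_sq_norm_sub_of_fst_of_snd (hπ.1 ▸ hZ2) (hπ.2 ▸ hY2)), hπ.2]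

variable [IsProbabilityMeasure PZ] [IsProbabilityMeasure PY]

lemma entW2_map_projSub_add_le (hZS : ∀ᵐ z ∂PZ, z ∈ S)
    (hZ2 : Integrable (fun z => ‖z‖ ^ 2) PZ) (hY2 : Integrable (fun y => ‖y‖ ^ 2) PY)
    {lam : ℝ} (hlam : 0 ≤ lam) :
    entW2 lam PZ (PY.map (projSub S)) + ∫ y, ‖y - projSub S y‖ ^ 2 ∂PY ≤ entW2 lam PZ PY := by
  have hP := measurable_projSub S
  refine le_entW2 hZ2 hY2 fun π hπ hmi => ?_
  have := hπ.isProbabilityMeasure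
  have hT : IsCoupling (π.map (Prod.map id (projSub S))) PZ (PY.map (projSub S)) := by
    simpa using hπ.map_prodMap measurable_id hP
  have hmiT := mutInfo_map_prodMap_le measurable_id hP π
  have h_le := entW2_le_entropicCost hlam hT (ne_top_of_le_ne_top hmi hmiT)
    (integrable_sq_norm_sub_of_fst_of_snd (hT.1 ▸ hZ2)
      (hT.2 ▸ integrable_sq_norm_map_of_norm_le hP (norm_projSub_le S) hY2))
  have h_mi := mul_le_mul_of_nonneg_left (ENNReal.toReal_mono hmi hmiT) hlam
  rw [entropicCost] at h_le ⊢
  rw [hπ.integral_sq_norm_sub_eq_map_projSub_add S hZS hZ2 hY2]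
  linarith

lemma entW2_le_entW2_map_projSub_add (hZS : ∀ᵐ z ∂PZ, z ∈ S)
    (hZ2 : Integrable (fun z => ‖z‖ ^ 2) PZ) (hY2 : Integrable (fun y => ‖y‖ ^ 2) PY)
    {lam : ℝ} (hlam : 0 ≤ lam) :
    entW2 lam PZ PY ≤ entW2 lam PZ (PY.map (projSub S)) + ∫ y, ‖y - projSub S y‖ ^ 2 ∂PY := by
  have hP := measurable_projSub S
  have := Measure.isProbabilityMeasure_map (μ := PY) hP.aemeasurable
  rw [← sub_le_iff_le_add]
  refine le_entW2 hZ2 (integrable_sq_norm_map_of_norm_le hP (norm_projSub_le S) hY2)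
    fun π hπ hmi => ?_
  have := hπ.isProbabilityMeasure
  have hL := hπ.parallelComp_condDistrib hP
  have hmiL := mutInfo_parallelComp_comp_le Kernel.id (condDistrib id (projSub S) PY) π
  have h_le := entW2_le_entropicCost hlam hL (ne_top_of_le_ne_top hmi hmiL)
    (integrable_sq_norm_sub_of_fst_of_snd (by rwa [hL.1]) (by rwa [hL.2]))
  have h_mi := mul_le_mul_of_nonneg_left (ENNReal.toReal_mono hmi hmiL) hlam
  rw [entropicCost, hL.integral_sq_norm_sub_eq_map_projSub_add S hZS hZ2 hY2,
    map_prodMap_parallelComp_condDistrib hπ.2 hP] at h_le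
  rw [entropicCost]
  linarith

end Decomposition

/-- **Projection decomposition of the Sinkhorn divergence.**
If `Z` is supported in a subspace `S`, then
`S_λ(P_Z, P_Y) = S_λ(P_Z, P_{Y_S}) + E[‖Y_{S⊥}‖²]
  + (W²_{2,λ}(P_{Y_S}, P_{Y_S}) − W²_{2,λ}(P_Y, P_Y))/2`. -/
theorem sinkhorn_projection_decomposition
    (d : ℕ) (S : Submodule ℝ (Evec d))
    (PZ PY : Measure (Evec d)) [IsProbabilityMeasure PZ] [IsProbabilityMeasure PY]
    (hZS : ∀ᵐ z ∂PZ, z ∈ S)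
    (hZ2 : Integrable (fun z => ‖z‖ ^ 2) PZ) (hY2 : Integrable (fun y => ‖y‖ ^ 2) PY)
    (lam : ℝ) (hlam : 0 < lam) :
    sinkhornDiv lam PZ PY =
      sinkhornDiv lam PZ (Measure.map (projSub S) PY) + (∫ y, ‖y - projSub S y‖ ^ 2 ∂PY) +
        (entW2 lam (Measure.map (projSub S) PY) (Measure.map (projSub S) PY) -
          entW2 lam PY PY) / 2 := by
  have h_le := entW2_le_entW2_map_projSub_add S hZS hZ2 hY2 hlam.le
  have h_ge := entW2_map_projSub_add_le S hZS hZ2 hY2 hlam.le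
  simp only [sinkhornDiv]
  linarith

end
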